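/- arXiv:2101.08104 — 3 statements merged into one kernel-verified Lean document; each statement's English description precedes it below -/
import Mathlib

section
/- If γ : Σ^⊥ × Σ^⊥ → ℝ is a metric, then the structure and depth preserving tree edit distance SdTed is a metric on the set of isomorphism classes of rooted labeled trees over Σ: it is nonnegative, SdTed(T, T') = 0 if and only if T and T' are isomorphic as rooted labeled trees, SdTed(T, T') = SdTed(T', T), and SdTed(T, T'') ≤ SdTed(T, T') + SdTed(T', T'') for all rooted labeled trees T, T', T''. -/
open scoped Classical

/-- A rooted labeled tree with vertex set `V` and labels in `σ`, encoded by a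
parent function: every vertex reaches the root by iterating `par`, and the
root is a fixed point of `par`. -/
structure LTree (V : Type) (σ : Type) where
  root : V
  par : V → V
  label : V → σ
  par_root : par root = root
  acyc : ∀ w : V, ∃ k : ℕ, par^[k] w = root

namespace LTree

variable {V V' V'' : Type} {σ : Type}

/-- The depth of a vertex: its distance to the root. -/
noncomputable def depth (T : LTree V σ) (w : V) : ℕ := Nat.find (T.acyc w)

/-- `T.Desc v w` means `w` is a descendant of `v` (or `w = v`), i.e. `w` belongs
to the subtree `T[v]` rooted at `v`. -/
def Desc (T : LTree V σ) (v w : V) : Prop := ∃ k : ℕ, T.par^[k] w = v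

/-- A structure and depth preserving mapping (SdM) between rooted labeled trees. -/
def IsSdM (T : LTree V σ) (T' : LTree V' σ) (M : Finset (V × V')) : Prop :=
  (∀ p ∈ M, ∀ q ∈ M, (p.1 = q.1 ↔ p.2 = q.2)) ∧
  (T.root, T'.root) ∈ M ∧
  (∀ p ∈ M, p.1 ≠ T.root → (T.par p.1, T'.par p.2) ∈ M)

/-- An isomorphism of rooted labeled trees: a bijection of the vertex sets
preserving the root, the parent relation (hence all edges), and all labels. -/
structure Iso (T : LTree V σ) (T' : LTree V' σ) where
  e : V ≃ V'
  root_eq : e T.root = T'.root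
  par_eq : ∀ w, e (T.par w) = T'.par (e w)
  label_eq : ∀ w, T'.label (e w) = T.label w

/-- `γ` is a metric on `Σ ∪ {⊥}` (where `⊥` is encoded by `none`). -/
def IsMetricCost (γ : Option σ → Option σ → ℝ) : Prop :=
  (∀ a b, γ a b = 0 ↔ a = b) ∧ (∀ a b, γ a b = γ b a) ∧
  (∀ a b c, γ a c ≤ γ a b + γ b c)

/-- The cost `γ(M)` of a mapping `M`: relabeling costs for matched pairs plus
deletion costs for unmatched vertices of `T` plus insertion costs for
unmatched vertices of `T'`. -/
noncomputable def cost [Fintype V] [Fintype V'] (γ : Option σ → Option σ → ℝ)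
    (T : LTree V σ) (T' : LTree V' σ) (M : Finset (V × V')) : ℝ :=
  (∑ p ∈ M, γ (some (T.label p.1)) (some (T'.label p.2)))
  + (∑ w ∈ Finset.univ.filter (fun w : V => ∀ p ∈ M, p.1 ≠ w),
      γ (some (T.label w)) none)
  + (∑ w' ∈ Finset.univ.filter (fun w' : V' => ∀ p ∈ M, p.2 ≠ w'),
      γ none (some (T'.label w')))

/-- The structure and depth preserving tree edit distance: the minimum cost
of a structure and depth preserving mapping between `T` and `T'`. -/
noncomputable def SdTed [Fintype V] [Fintype V'] (γ : Option σ → Option σ → ℝ)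
    (T : LTree V σ) (T' : LTree V' σ) : ℝ :=
  sInf {c : ℝ | ∃ M : Finset (V × V'), IsSdM T T' M ∧ cost γ T T' M = c}

theorem Desc.par {T : LTree V σ} {v w : V} (h : T.Desc v w) (hw : w ≠ v) :
    T.Desc v (T.par w) := by
  obtain ⟨k, hk⟩ := h
  cases k with
  | zero => exact absurd hk hw
  | succ k => exact ⟨k, by rwa [Function.iterate_succ_apply] at hk⟩

/-- The parent function of the subtree `T[v]`. -/
noncomputable def subPar (T : LTree V σ) (v : V) (w : {w : V // T.Desc v w}) :
    {w : V // T.Desc v w} :=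
  if h : (w : V) = v then ⟨v, 0, rfl⟩ else ⟨T.par w, w.2.par h⟩

/-- The subtree `T[v]` of `T` rooted at `v`, induced by `v` and all its
descendants. -/
noncomputable def sub (T : LTree V σ) (v : V) : LTree {w : V // T.Desc v w} σ where
  root := ⟨v, 0, rfl⟩
  par := subPar T v
  label := fun w => T.label w
  par_root := dif_pos rfl
  acyc := by
    have key : ∀ (k : ℕ) (w : {w : V // T.Desc v w}), T.par^[k] (w : V) = v →
        (subPar T v)^[k] w = ⟨v, 0, rfl⟩ := by
      intro k
      induction k with
      | zero => intro w hw; exact Subtype.ext hw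
      | succ k ih =>
        intro w hw
        by_cases hv : (w : V) = v
        · rw [Function.iterate_succ_apply]
          have : subPar T v w = ⟨v, 0, rfl⟩ := dif_pos hv
          rw [this]
          have hfix : subPar T v ⟨v, 0, rfl⟩ = ⟨v, 0, rfl⟩ := dif_pos rfl
          exact Function.iterate_fixed hfix k
        · rw [Function.iterate_succ_apply]
          have : subPar T v w = ⟨T.par w, w.2.par hv⟩ := dif_neg hv
          rw [this]
          exact ih _ (by rwa [Function.iterate_succ_apply] at hw)
    intro w
    obtain ⟨k, hk⟩ := w.2
    exact ⟨k, key k w hk⟩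

end LTree

open LTree

/-
An SdM is definite, so it is the graph of a partial equivalence `f : V ≃. V'`, and composing
two SdMs amounts to `PEquiv.trans`. In these terms the cost of `f` is
`∑ v, γ (ℓ v) (ℓ' (f v))` plus the insertion costs of the vertices outside the range of `f`.
The triangle inequality for `γ` then bounds the cost of `f.trans g` vertex by vertex: a vertex
of `T` pays at most its cost under `f` plus the cost under `g` of its partner in `T'`, and a vertex
of `T''` inserted only because its partner `v'` in `T'` was inserted by `f` pays at most the
insertion cost of `v'` plus the cost of matching `v'` under `g`. Symmetry comes from swapping
pairs, and an SdM of cost zero matches every vertex of both trees without relabeling, hence is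
an isomorphism.
-/

theorem Option.exists_mem_iff_of_subsingleton {β : Type*} {P : β → Prop}
    (hP : {b | P b}.Subsingleton) :
    ∃ o : Option β, ∀ b, b ∈ o ↔ P b := by
  by_cases h : ∃ b, P b
  · obtain ⟨b₀, hb₀⟩ := h
    exact ⟨some b₀, fun b => ⟨fun hb => Option.mem_some_iff.1 hb ▸ hb₀,
      fun hb => Option.mem_some_iff.2 (hP hb₀ hb)⟩⟩
  · exact ⟨none, fun b => by simpa using fun hb => h ⟨b, hb⟩⟩

namespace PEquiv

variable {α β : Type*}

noncomputable def graph [Fintype α] [Fintype β] (f : α ≃. β) : Finset (α × β) :=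
  Finset.univ.filter fun p => p.2 ∈ f p.1

@[simp]
theorem mem_graph [Fintype α] [Fintype β] {f : α ≃. β} {p : α × β} :
    p ∈ f.graph ↔ p.2 ∈ f p.1 := by
  simp [graph]

theorem exists_graph_eq [Fintype α] [Fintype β] {M : Finset (α × β)}
    (hM : ∀ p ∈ M, ∀ q ∈ M, (p.1 = q.1 ↔ p.2 = q.2)) : ∃ f : α ≃. β, f.graph = M := by
  choose F hF using fun a => Option.exists_mem_iff_of_subsingleton (P := fun b => (a, b) ∈ M)
    fun _ hb _ hb' => (hM _ hb _ hb').1 rfl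
  choose G hG using fun b => Option.exists_mem_iff_of_subsingleton (P := fun a => (a, b) ∈ M)
    fun _ ha _ ha' => (hM _ ha _ ha').2 rfl
  exact ⟨⟨F, G, fun a b => (hG b a).trans (hF a b).symm⟩, by ext p; simpa using hF p.1 p.2⟩

theorem sum_map_getD [Fintype α] [Fintype β] {R : Type*} [AddCommMonoid R] (f : α ≃. β)
    (G : β → R) : ∑ a, ((f a).map G).getD 0 = ∑ b, if (f.symm b).isSome then G b else 0 := by
  have key : ∀ o : Option β, (o.map G).getD 0 = ∑ b, if b ∈ o then G b else 0 := by
    rintro (_ | b₀) <;> simp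
  calc ∑ a, ((f a).map G).getD 0 = ∑ b, ∑ a, if a ∈ f.symm b then G b else 0 := by
        simp_rw [key, mem_iff_mem]; exact Finset.sum_comm
    _ = _ := by
        refine Fintype.sum_congr _ _ fun b => ?_
        rcases f.symm b with _ | a₀ <;> simp

def toEquivOfIsSome (f : α ≃. β) (hf : ∀ a, (f a).isSome) (hf' : ∀ b, (f.symm b).isSome) :
    α ≃ β where
  toFun a := (f a).get (hf a)
  invFun b := (f.symm b).get (hf' b)
  left_inv _ := Option.get_of_mem _ (f.mem_iff_mem.2 (Option.get_mem _))
  right_inv _ := Option.get_of_mem _ (f.mem_iff_mem.1 (Option.get_mem _))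

theorem toEquivOfIsSome_mem (f : α ≃. β) (hf : ∀ a, (f a).isSome)
    (hf' : ∀ b, (f.symm b).isSome) (a : α) : f.toEquivOfIsSome hf hf' a ∈ f a :=
  Option.get_mem _

end PEquiv

namespace LTree

variable {V V' V'' σ : Type} {γ : Option σ → Option σ → ℝ}

theorem IsMetricCost.nonneg (hγ : IsMetricCost γ) (a b : Option σ) : 0 ≤ γ a b := by
  obtain ⟨hzero, hsymm, htri⟩ := hγ
  have := htri a b a
  rw [(hzero a a).2 rfl, hsymm b a] at this
  linarith

theorem IsSdM.swap {T : LTree V σ} {T' : LTree V' σ} {M : Finset (V × V')}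
    (h : IsSdM T T' M) : IsSdM T' T (M.image Prod.swap) := by
  obtain ⟨hdef, hroot, hpar⟩ := h
  simp only [IsSdM, Finset.forall_mem_image]
  refine ⟨fun p hp q hq => (hdef p hp q hq).symm, ?_, fun p hp hne => ?_⟩
  · exact Finset.mem_image.2 ⟨_, hroot, rfl⟩
  · exact Finset.mem_image.2 ⟨_, hpar p hp fun h => hne ((hdef p hp _ hroot).1 h), rfl⟩

theorem isSdM_singleton_root (T : LTree V σ) (T' : LTree V' σ) :
    IsSdM T T' {(T.root, T'.root)} := by
  simp [IsSdM]

section Fintype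

variable [Fintype V] [Fintype V']

theorem cost_nonneg (hγ : IsMetricCost γ) (T : LTree V σ) (T' : LTree V' σ)
    (M : Finset (V × V')) : 0 ≤ cost γ T T' M := by
  refine add_nonneg (add_nonneg ?_ ?_) ?_ <;> exact Finset.sum_nonneg fun _ _ => hγ.nonneg _ _

theorem cost_image_swap (hγ : IsMetricCost γ) (T : LTree V σ) (T' : LTree V' σ)
    (M : Finset (V × V')) : cost γ T' T (M.image Prod.swap) = cost γ T T' M := by
  obtain ⟨-, hsymm, -⟩ := hγ
  simp only [cost, Finset.sum_image Prod.swap_injective.injOn, Finset.forall_mem_image,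
    Prod.fst_swap, Prod.snd_swap, hsymm (some _) none, hsymm (some (T'.label _))]
  ring

theorem finite_setOf_cost (γ : Option σ → Option σ → ℝ) (T : LTree V σ) (T' : LTree V' σ) :
    {c | ∃ M, IsSdM T T' M ∧ cost γ T T' M = c}.Finite :=
  (Set.finite_range (cost γ T T')).subset (by rintro _ ⟨M, -, rfl⟩; exact ⟨M, rfl⟩)

theorem sdTed_le_cost {T : LTree V σ} {T' : LTree V' σ} {M : Finset (V × V')}
    (h : IsSdM T T' M) : SdTed γ T T' ≤ cost γ T T' M :=
  csInf_le (finite_setOf_cost γ T T').bddBelow ⟨M, h, rfl⟩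

theorem exists_isSdM_cost_eq_sdTed (γ : Option σ → Option σ → ℝ) (T : LTree V σ)
    (T' : LTree V' σ) : ∃ M, IsSdM T T' M ∧ cost γ T T' M = SdTed γ T T' :=
  Set.Nonempty.csInf_mem (s := {c | ∃ M, IsSdM T T' M ∧ cost γ T T' M = c})
    ⟨_, _, isSdM_singleton_root T T', rfl⟩ (finite_setOf_cost γ T T')

theorem sdTed_nonneg (hγ : IsMetricCost γ) (T : LTree V σ) (T' : LTree V' σ) :
    0 ≤ SdTed γ T T' := by
  obtain ⟨M, -, hM⟩ := exists_isSdM_cost_eq_sdTed γ T T'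
  exact hM ▸ cost_nonneg hγ T T' M

theorem sdTed_comm (hγ : IsMetricCost γ) (T : LTree V σ) (T' : LTree V' σ) :
    SdTed γ T T' = SdTed γ T' T := by
  have key : ∀ {W W' : Type} [Fintype W] [Fintype W'] (S : LTree W σ) (S' : LTree W' σ),
      SdTed γ S' S ≤ SdTed γ S S' := fun S S' => by
    obtain ⟨M, hM, hcost⟩ := exists_isSdM_cost_eq_sdTed γ S S'
    exact hcost ▸ cost_image_swap hγ S S' M ▸ sdTed_le_cost hM.swap
  exact le_antisymm (key T' T) (key T T')

theorem isSdM_graph_iff {T : LTree V σ} {T' : LTree V' σ} {f : V ≃. V'} :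
    IsSdM T T' f.graph ↔
      T'.root ∈ f T.root ∧ ∀ v v', v' ∈ f v → v ≠ T.root → T'.par v' ∈ f (T.par v) := by
  simp only [IsSdM, PEquiv.mem_graph, Prod.forall]
  exact and_iff_right_of_imp fun _ v v' hv w w' hw =>
    ⟨fun h => Option.mem_unique (h ▸ hv) hw, fun h => f.inj (h ▸ hv) hw⟩

theorem IsSdM.exists_graph_eq {T : LTree V σ} {T' : LTree V' σ} {M : Finset (V × V')}
    (h : IsSdM T T' M) : ∃ f : V ≃. V', f.graph = M :=
  PEquiv.exists_graph_eq h.1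

theorem cost_graph (γ : Option σ → Option σ → ℝ) (T : LTree V σ) (T' : LTree V' σ)
    (f : V ≃. V') :
    cost γ T T' f.graph =
      ∑ v, γ (some (T.label v)) ((f v).map T'.label) +
        ∑ v', if (f.symm v').isSome then 0 else γ none (some (T'.label v')) := by
  have matched : ∑ p ∈ f.graph, γ (some (T.label p.1)) (some (T'.label p.2)) =
      ∑ v, ((f v).map fun v' => γ (some (T.label v)) (some (T'.label v'))).getD 0 := by
    rw [PEquiv.graph, Finset.sum_filter, ← Finset.univ_product_univ, Finset.sum_product]
    refine Fintype.sum_congr _ _ fun v => ?_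
    rcases h : f v with _ | v' <;> simp [h]
  have unmatched : ∀ v, (∀ p ∈ f.graph, p.1 ≠ v) ↔ f v = none := fun v => by
    simp only [Option.eq_none_iff_forall_not_mem, PEquiv.mem_graph, Prod.forall]
    exact ⟨fun h v' hv' => h v v' hv' rfl, fun h w v' hv' hw => h v' (hw ▸ hv')⟩
  have unmatched' : ∀ v', (∀ p ∈ f.graph, p.2 ≠ v') ↔ f.symm v' = none := fun v' => by
    simp only [Option.eq_none_iff_forall_not_mem, PEquiv.mem_graph, Prod.forall, f.mem_iff_mem]
    exact ⟨fun h v hv => h v v' hv rfl, fun h v w hw hw' => h v (hw' ▸ hw)⟩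
  rw [cost, matched, Finset.sum_filter, Finset.sum_filter, ← Finset.sum_add_distrib]
  simp only [unmatched, unmatched']
  congr 1
  · refine Fintype.sum_congr _ _ fun v => ?_
    rcases f v with _ | v' <;> simp
  · refine Fintype.sum_congr _ _ fun v' => ?_
    rcases f.symm v' with _ | v <;> simp

theorem nonempty_iso_of_graph {T : LTree V σ} {T' : LTree V' σ} {f : V ≃. V'}
    (hf : IsSdM T T' f.graph) (hcod : ∀ v', (f.symm v').isSome)
    (hlabel : ∀ v, (f v).map T'.label = some (T.label v)) : Nonempty (Iso T T') := by
  obtain ⟨hroot, hpar⟩ := isSdM_graph_iff.1 hf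
  have hdom : ∀ v, (f v).isSome := fun v => by simpa using congrArg Option.isSome (hlabel v)
  set e := f.toEquivOfIsSome hdom hcod
  have he : ∀ v, f v = some (e v) := fun v => f.toEquivOfIsSome_mem hdom hcod v
  have root_eq : e T.root = T'.root := Option.mem_unique (he _) hroot
  refine ⟨⟨e, root_eq, fun w => ?_, fun w => ?_⟩⟩
  · by_cases hw : w = T.root
    · rw [hw, T.par_root, root_eq, T'.par_root]
    · exact Option.mem_unique (he _) (hpar w (e w) (he w) hw)
  · simpa [he w] using hlabel w

theorem sdTed_eq_zero_iff (hγ : IsMetricCost γ) {T : LTree V σ} {T' : LTree V' σ} :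
    SdTed γ T T' = 0 ↔ Nonempty (Iso T T') := by
  have hzero := hγ.1
  constructor
  · intro h
    obtain ⟨M, hM, hcost⟩ := exists_isSdM_cost_eq_sdTed γ T T'
    obtain ⟨f, rfl⟩ := hM.exists_graph_eq
    rw [h, cost_graph] at hcost
    have ins_nonneg : ∀ v', 0 ≤ if (f.symm v').isSome then 0 else γ none (some (T'.label v')) :=
      fun v' => by split_ifs; exacts [le_rfl, hγ.nonneg _ _]
    obtain ⟨hmatch, hins⟩ := (add_eq_zero_iff_of_nonneg
      (Finset.sum_nonneg fun v _ => hγ.nonneg _ _)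
      (Finset.sum_nonneg fun v' _ => ins_nonneg v')).1 hcost
    rw [Finset.sum_eq_zero_iff_of_nonneg fun v _ => hγ.nonneg _ _] at hmatch
    rw [Finset.sum_eq_zero_iff_of_nonneg fun v' _ => ins_nonneg v'] at hins
    refine nonempty_iso_of_graph hM (fun v' => ?_) fun v =>
      ((hzero _ _).1 (hmatch v (Finset.mem_univ v))).symm
    by_contra hv'
    simpa [hv', hzero] using hins v' (Finset.mem_univ v')
  · rintro ⟨φ⟩
    have hf : IsSdM T T' φ.e.toPEquiv.graph := isSdM_graph_iff.2
      ⟨by simp [φ.root_eq], fun v v' hv _ => by simp_all [φ.par_eq]⟩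
    have hcost : cost γ T T' φ.e.toPEquiv.graph = 0 := by
      simp [cost_graph, ← Equiv.toPEquiv_symm, φ.label_eq, (hzero _ _).2]
    exact le_antisymm (hcost ▸ sdTed_le_cost hf) (sdTed_nonneg hγ T T')

end Fintype

theorem IsSdM.graph_trans [Fintype V] [Fintype V'] [Fintype V'']
    {T : LTree V σ} {T' : LTree V' σ} {T'' : LTree V'' σ}
    {f : V ≃. V'} {g : V' ≃. V''} (hf : IsSdM T T' f.graph) (hg : IsSdM T' T'' g.graph) :
    IsSdM T T'' (f.trans g).graph := by
  obtain ⟨hf_root, hf_par⟩ := isSdM_graph_iff.1 hf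
  obtain ⟨hg_root, hg_par⟩ := isSdM_graph_iff.1 hg
  refine isSdM_graph_iff.2 ⟨(f.mem_trans g _ _).2 ⟨_, hf_root, hg_root⟩, fun v v'' h hv => ?_⟩
  obtain ⟨v', hv', hv''⟩ := (f.mem_trans g _ _).1 h
  have hv'_ne : v' ≠ T'.root := fun h' => hv (f.inj (h' ▸ hv') hf_root)
  exact (f.mem_trans g _ _).2 ⟨_, hf_par v v' hv' hv, hg_par v' v'' hv'' hv'_ne⟩

theorem sum_match_trans_le [Fintype V] [Fintype V'] (hγ : IsMetricCost γ) (T : LTree V σ)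
    (T' : LTree V' σ) (T'' : LTree V'' σ) (f : V ≃. V') (g : V' ≃. V'') :
    ∑ v, γ (some (T.label v)) ((f.trans g v).map T''.label) ≤
      ∑ v, γ (some (T.label v)) ((f v).map T'.label) +
        ∑ v', if (f.symm v').isSome then γ (some (T'.label v')) ((g v').map T''.label) else 0 := by
  rw [← f.sum_map_getD, ← Finset.sum_add_distrib]
  refine Finset.sum_le_sum fun v _ => ?_
  rcases hv : f v with _ | v'
  · simp [PEquiv.trans, hv]
  · simpa [PEquiv.trans, hv] using hγ.2.2 _ (some (T'.label v')) _

theorem sum_insert_trans_le [Fintype V'] [Fintype V''] (hγ : IsMetricCost γ) (T' : LTree V' σ)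
    (T'' : LTree V'' σ) (f : V ≃. V') (g : V' ≃. V'') :
    ∑ v'', (if ((f.trans g).symm v'').isSome then 0 else γ none (some (T''.label v''))) ≤
      ∑ v'', (if (g.symm v'').isSome then 0 else γ none (some (T''.label v''))) +
        ∑ v', if (f.symm v').isSome then 0
          else γ none (some (T'.label v')) + γ (some (T'.label v')) ((g v').map T''.label) := by
  set extra : V' → ℝ := fun v' => if (f.symm v').isSome then 0
    else γ none (some (T'.label v')) + γ (some (T'.label v')) ((g v').map T''.label)
  have extra_nonneg : ∀ v', 0 ≤ extra v' := fun v' => by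
    unfold extra; split_ifs
    exacts [le_rfl, add_nonneg (hγ.nonneg _ _) (hγ.nonneg _ _)]
  calc _ ≤ ∑ v'', ((if (g.symm v'').isSome then 0 else γ none (some (T''.label v''))) +
        ((g.symm v'').map extra).getD 0) := by
        refine Finset.sum_le_sum fun v'' _ => ?_
        rw [PEquiv.symm_trans_rev]
        rcases hv'' : g.symm v'' with _ | v'
        · simp [PEquiv.trans, hv'']
        · rcases hv' : f.symm v' with _ | v
          · simpa [PEquiv.trans, hv'', hv', extra, g.eq_some_iff.1 hv''] using
              hγ.2.2 none (some (T'.label v')) (some (T''.label v''))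
          · simp [PEquiv.trans, hv'', hv', extra]
    _ = _ + ∑ v', if (g.symm.symm v').isSome then extra v' else 0 := by
        rw [Finset.sum_add_distrib, g.symm.sum_map_getD]
    _ ≤ _ := by
        gcongr with v'
        split_ifs
        exacts [le_rfl, extra_nonneg v']

theorem cost_graph_trans_le [Fintype V] [Fintype V'] [Fintype V''] (hγ : IsMetricCost γ)
    (T : LTree V σ) (T' : LTree V' σ) (T'' : LTree V'' σ) (f : V ≃. V') (g : V' ≃. V'') :
    cost γ T T'' (f.trans g).graph ≤ cost γ T T' f.graph + cost γ T' T'' g.graph := by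
  have hmatch := sum_match_trans_le hγ T T' T'' f g
  have hinsert := sum_insert_trans_le hγ T' T'' f g
  rw [cost_graph, cost_graph, cost_graph]
  set relabel : V' → ℝ := fun v' => γ (some (T'.label v')) ((g v').map T''.label)
  set ins : V' → ℝ := fun v' => γ none (some (T'.label v'))
  have hsplit : ∑ v', ((if (f.symm v').isSome then relabel v' else 0) +
        if (f.symm v').isSome then 0 else ins v' + relabel v') =
      ∑ v', (relabel v' + if (f.symm v').isSome then 0 else ins v') :=
    Fintype.sum_congr _ _ fun v' => by split_ifs <;> ring
  rw [Finset.sum_add_distrib, Finset.sum_add_distrib] at hsplit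
  linarith

theorem sdTed_triangle [Fintype V] [Fintype V'] [Fintype V''] (hγ : IsMetricCost γ)
    (T : LTree V σ) (T' : LTree V' σ) (T'' : LTree V'' σ) : SdTed γ T T'' ≤ SdTed γ T T' + SdTed γ T' T'' := by
  obtain ⟨M, hM, hcost⟩ := exists_isSdM_cost_eq_sdTed γ T T'
  obtain ⟨M', hM', hcost'⟩ := exists_isSdM_cost_eq_sdTed γ T' T''
  obtain ⟨f, rfl⟩ := hM.exists_graph_eq
  obtain ⟨g, rfl⟩ := hM'.exists_graph_eq
  rw [← hcost, ← hcost']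
  exact (sdTed_le_cost (hM.graph_trans hM')).trans (cost_graph_trans_le hγ T T' T'' f g)

end LTree

/-- If `γ` is a metric on `Σ ∪ {⊥}`, then the structure and
depth preserving tree edit distance `SdTed` is a metric on the set of
isomorphism classes of rooted labeled trees over `Σ`: it is nonnegative,
it vanishes exactly on isomorphic pairs, it is symmetric, and it satisfies
the triangle inequality. -/
theorem sdted_is_metric {σ : Type} (γ : Option σ → Option σ → ℝ)
    (hγ : IsMetricCost γ) :
    (∀ (V : Type) [Fintype V] (V' : Type) [Fintype V']
        (T : LTree V σ) (T' : LTree V' σ),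
      0 ≤ SdTed γ T T' ∧
      (SdTed γ T T' = 0 ↔ Nonempty (Iso T T')) ∧
      SdTed γ T T' = SdTed γ T' T) ∧
    (∀ (V : Type) [Fintype V] (V' : Type) [Fintype V'] (V'' : Type) [Fintype V'']
        (T : LTree V σ) (T' : LTree V' σ) (T'' : LTree V'' σ),
      SdTed γ T T'' ≤ SdTed γ T T' + SdTed γ T' T'') :=
  ⟨fun _ _ _ _ T T' => ⟨sdTed_nonneg hγ T T', sdTed_eq_zero_iff hγ, sdTed_comm hγ T T'⟩,
    fun _ _ _ _ _ _ T T' T'' => sdTed_triangle hγ T T' T''⟩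
end

section
/- Cost decomposition of an SdM: let (M, T, T') be an SdM between rooted labeled trees T and T' with metric cost function γ, and let S be the set of pairs (T_i, T_j') of child subtrees of r(T) and r(T') whose roots are matched by M. Then γ(M) = γ(ℓ(r(T)), ℓ(r(T'))) + Σ_{(T_i, T_j') ∈ S} γ(M restricted to T_i × T_j') + Σ_{T_i unmatched} Σ_{v ∈ V(T_i)} γ(ℓ(v), ⊥) + Σ_{T_j' unmatched} Σ_{v' ∈ V(T_j')} γ(⊥, ℓ(v')), where a child subtree is unmatched if its root occurs in no pair of M. -/
open scoped Classical

namespace LTree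

variable {V V' : Type} {σ : Type}

/-- The children of the root of `T`. -/
noncomputable def childs [Fintype V] (T : LTree V σ) : Finset V :=
  Finset.univ.filter (fun u => T.par u = T.root ∧ u ≠ T.root)

/-- The cost of deleting the whole subtree `T[v]`:
`∑_{w ∈ V(T[v])} γ(ℓ(w), ⊥)`. -/
noncomputable def delCost [Fintype V] (γ : Option σ → Option σ → ℝ)
    (T : LTree V σ) (v : V) : ℝ :=
  ∑ w ∈ Finset.univ.filter (fun w => T.Desc v w), γ (some (T.label w)) none

/-- The cost of inserting the whole subtree `T'[v']`:
`∑_{w' ∈ V(T'[v'])} γ(⊥, ℓ(w'))`. -/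
noncomputable def insCost [Fintype V'] (γ : Option σ → Option σ → ℝ)
    (T' : LTree V' σ) (v' : V') : ℝ :=
  ∑ w' ∈ Finset.univ.filter (fun w' => T'.Desc v' w'), γ none (some (T'.label w'))

end LTree

open LTree

/-- The restriction `M ∩ (V(T[v]) × V(T'[v']))` of a mapping `M`, viewed as a
set of pairs of vertices of the subtrees `T[v]` and `T'[v']`. -/
noncomputable def LTree.restrictMap {σ : Type} {V V' : Type} [Fintype V] [Fintype V']
    (T : LTree V σ) (T' : LTree V' σ) (v : V) (v' : V') (M : Finset (V × V')) :
    Finset ({w : V // T.Desc v w} × {w' : V' // T'.Desc v' w'}) :=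
  Finset.univ.filter (fun q => ((q.1 : V), (q.2 : V')) ∈ M)


namespace LTree

variable {V V' : Type} {σ : Type}

lemma depth_eq_zero_iff (T : LTree V σ) (w : V) : T.depth w = 0 ↔ w = T.root := by
  unfold depth
  rw [Nat.find_eq_zero]
  simp

lemma par_iterate_depth (T : LTree V σ) (w : V) : T.par^[T.depth w] w = T.root :=
  Nat.find_spec (T.acyc w)

lemma desc_root {T : LTree V σ} {u : V} (h : T.Desc u T.root) : u = T.root := by
  obtain ⟨k, hk⟩ := h
  rw [Function.iterate_fixed T.par_root k] at hk
  exact hk.symm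

lemma desc_child_eq {T : LTree V σ} {u w : V} (h : T.Desc u w)
    (hu1 : T.par u = T.root) (hu2 : u ≠ T.root) :
    T.depth w ≠ 0 ∧ T.par^[T.depth w - 1] w = u := by
  obtain ⟨k, hk⟩ := h
  have hk1 : T.par^[k + 1] w = T.root := by
    rw [Function.iterate_succ_apply', hk, hu1]
  have hle : T.depth w ≤ k + 1 := Nat.find_le hk1
  have hlt : k < T.depth w := by
    by_contra hc
    push_neg at hc
    have hroot : T.par^[k] w = T.root := by
      calc T.par^[k] w = T.par^[k - T.depth w] (T.par^[T.depth w] w) := by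
            rw [← Function.iterate_add_apply]; congr 1; omega
        _ = T.root := by
            rw [par_iterate_depth]; exact Function.iterate_fixed T.par_root _
    rw [hk] at hroot
    exact hu2 hroot
  have hd : T.depth w = k + 1 := by omega
  refine ⟨by omega, ?_⟩
  rw [hd]
  simpa using hk

lemma desc_child_unique {T : LTree V σ} {u a w : V} (hu : T.Desc u w) (ha : T.Desc a w)
    (hu1 : T.par u = T.root) (hu2 : u ≠ T.root)
    (ha1 : T.par a = T.root) (ha2 : a ≠ T.root) : u = a := by
  obtain ⟨_, h1⟩ := desc_child_eq hu hu1 hu2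
  obtain ⟨_, h2⟩ := desc_child_eq ha ha1 ha2
  rw [← h1, ← h2]

lemma exists_child_anc {T : LTree V σ} {w : V} (hw : w ≠ T.root) :
    ∃ u, T.par u = T.root ∧ u ≠ T.root ∧ T.Desc u w := by
  have hd : T.depth w ≠ 0 := fun h => hw ((depth_eq_zero_iff T w).mp h)
  refine ⟨T.par^[T.depth w - 1] w, ?_, ?_, ⟨_, rfl⟩⟩
  · have h0 : T.par^[T.depth w - 1 + 1] w = T.root := by
      rw [show T.depth w - 1 + 1 = T.depth w by omega]
      exact par_iterate_depth T w
    rwa [Function.iterate_succ_apply'] at h0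
  · intro h
    have := Nat.find_min (T.acyc w) (show T.depth w - 1 < T.depth w by omega)
    exact this h

lemma depth_par_lt {T : LTree V σ} {w : V} (hw : w ≠ T.root) :
    T.depth (T.par w) < T.depth w := by
  have hd : T.depth w ≠ 0 := fun h => hw ((depth_eq_zero_iff T w).mp h)
  have h1 : T.par^[T.depth w - 1] (T.par w) = T.root := by
    have h0 : T.par^[T.depth w - 1 + 1] w = T.root := by
      rw [show T.depth w - 1 + 1 = T.depth w by omega]
      exact par_iterate_depth T w
    rwa [Function.iterate_succ_apply] at h0
  have h3 : T.depth (T.par w) ≤ T.depth w - 1 := by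
    unfold depth; exact Nat.find_le h1
  omega

lemma mem_childs_iff [Fintype V] {T : LTree V σ} {u : V} :
    u ∈ T.childs ↔ T.par u = T.root ∧ u ≠ T.root := by
  simp [childs]

lemma sdm_anc {T : LTree V σ} {T' : LTree V' σ} {M : Finset (V × V')}
    (hM : IsSdM T T' M) : ∀ p ∈ M, p.1 ≠ T.root →
    ∃ q ∈ M, (T.par q.1 = T.root ∧ q.1 ≠ T.root) ∧ (T'.par q.2 = T'.root ∧ q.2 ≠ T'.root)
      ∧ T.Desc q.1 p.1 ∧ T'.Desc q.2 p.2 := by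
  obtain ⟨hdef, hroot, hstr⟩ := hM
  suffices h : ∀ n, ∀ p ∈ M, p.1 ≠ T.root → T.depth p.1 ≤ n →
      ∃ q ∈ M, (T.par q.1 = T.root ∧ q.1 ≠ T.root) ∧
        (T'.par q.2 = T'.root ∧ q.2 ≠ T'.root) ∧ T.Desc q.1 p.1 ∧ T'.Desc q.2 p.2 by
    exact fun p hp h1 => h (T.depth p.1) p hp h1 le_rfl
  intro n
  induction n with
  | zero =>
    intro p hp h1 hd
    exact absurd ((depth_eq_zero_iff T p.1).mp (Nat.le_zero.mp hd)) h1
  | succ n ih =>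
    intro p hp h1 hd
    have hq : (T.par p.1, T'.par p.2) ∈ M := hstr p hp h1
    by_cases hpar : T.par p.1 = T.root
    · have h2' : T'.par p.2 = T'.root := by
        have := (hdef _ hq _ hroot).mp hpar
        exact this
      have hp2 : p.2 ≠ T'.root := fun h => h1 ((hdef p hp _ hroot).mpr h)
      exact ⟨p, hp, ⟨hpar, h1⟩, ⟨h2', hp2⟩, ⟨0, rfl⟩, ⟨0, rfl⟩⟩
    · have hdlt : T.depth (T.par p.1) < T.depth p.1 := depth_par_lt h1
      obtain ⟨q, hqM, hq1, hq2, ⟨k, hk⟩, ⟨k', hk'⟩⟩ :=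
        ih (T.par p.1, T'.par p.2) hq hpar (show T.depth (T.par p.1) ≤ n by omega)
      exact ⟨q, hqM, hq1, hq2, ⟨k + 1, by rw [Function.iterate_succ_apply]; exact hk⟩,
        ⟨k' + 1, by rw [Function.iterate_succ_apply]; exact hk'⟩⟩

end LTree

namespace LTree

section SdM
variable {V V' : Type} {σ : Type} [Fintype V] [Fintype V']
variable {T : LTree V σ} {T' : LTree V' σ} {M : Finset (V × V')}

/-- Every matched non-root vertex lies in a matched pair of child subtrees. -/
lemma sdm_anc' (hM : IsSdM T T' M) : ∀ p ∈ M, p.1 ≠ T.root →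
    ∃ q ∈ M.filter (fun p => p.1 ∈ T.childs ∧ p.2 ∈ T'.childs),
      T.Desc q.1 p.1 ∧ T'.Desc q.2 p.2 := by
  intro p hp h1
  obtain ⟨q, hqM, hq1, hq2, hd1, hd2⟩ := sdm_anc hM p hp h1
  exact ⟨q, Finset.mem_filter.mpr ⟨hqM, mem_childs_iff.mpr hq1, mem_childs_iff.mpr hq2⟩,
    hd1, hd2⟩

lemma sdm_D3 (hM : IsSdM T T' M) :
    ∀ q ∈ M.filter (fun p => p.1 ∈ T.childs ∧ p.2 ∈ T'.childs),
    ∀ p ∈ M, T.Desc q.1 p.1 → T'.Desc q.2 p.2 := by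
  intro q hq p hp hdesc
  obtain ⟨hqM, hq1, hq2⟩ := Finset.mem_filter.mp hq
  obtain ⟨hq11, hq12⟩ := mem_childs_iff.mp hq1
  have h1 : p.1 ≠ T.root := by
    intro h
    rw [h] at hdesc
    exact hq12 (desc_root hdesc)
  obtain ⟨a, haM, ha1, ha2, hd1, hd2⟩ := sdm_anc hM p hp h1
  have heq : a.1 = q.1 := desc_child_unique hd1 hdesc ha1.1 ha1.2 hq11 hq12
  have heq2 : a.2 = q.2 := (hM.1 a haM q hqM).mp heq
  rwa [heq2] at hd2

lemma sdm_D3' (hM : IsSdM T T' M) :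
    ∀ q ∈ M.filter (fun p => p.1 ∈ T.childs ∧ p.2 ∈ T'.childs),
    ∀ p ∈ M, T'.Desc q.2 p.2 → T.Desc q.1 p.1 := by
  intro q hq p hp hdesc
  obtain ⟨hqM, hq1, hq2⟩ := Finset.mem_filter.mp hq
  obtain ⟨hq21, hq22⟩ := mem_childs_iff.mp hq2
  have h2 : p.2 ≠ T'.root := by
    intro h
    rw [h] at hdesc
    exact hq22 (desc_root hdesc)
  have h1 : p.1 ≠ T.root := by
    intro h
    exact h2 ((hM.1 p hp _ hM.2.1).mp h)
  obtain ⟨a, haM, ha1, ha2, hd1, hd2⟩ := sdm_anc hM p hp h1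
  have heq : a.2 = q.2 := desc_child_unique hd2 hdesc ha2.1 ha2.2 hq21 hq22
  have heq2 : a.1 = q.1 := (hM.1 a haM q hqM).mpr heq
  rwa [heq2] at hd1

lemma sdm_D4 (hM : IsSdM T T' M) : ∀ p ∈ M, p.1 ∈ T.childs →
    p ∈ M.filter (fun p => p.1 ∈ T.childs ∧ p.2 ∈ T'.childs) := by
  intro p hp hc
  obtain ⟨hc1, hc2⟩ := mem_childs_iff.mp hc
  obtain ⟨a, haM, ha1, ha2, hd1, hd2⟩ := sdm_anc hM p hp hc2
  have heq : a.1 = p.1 := desc_child_unique hd1 ⟨0, rfl⟩ ha1.1 ha1.2 hc1 hc2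
  have heq2 : a.2 = p.2 := (hM.1 a haM p hp).mp heq
  refine Finset.mem_filter.mpr ⟨hp, hc, mem_childs_iff.mpr ?_⟩
  rw [← heq2]
  exact ha2

lemma sdm_D4' (hM : IsSdM T T' M) : ∀ p ∈ M, p.2 ∈ T'.childs →
    p ∈ M.filter (fun p => p.1 ∈ T.childs ∧ p.2 ∈ T'.childs) := by
  intro p hp hc
  obtain ⟨hc1, hc2⟩ := mem_childs_iff.mp hc
  have h1 : p.1 ≠ T.root := by
    intro h
    exact hc2 ((hM.1 p hp _ hM.2.1).mp h)
  obtain ⟨a, haM, ha1, ha2, hd1, hd2⟩ := sdm_anc hM p hp h1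
  have heq : a.2 = p.2 := desc_child_unique hd2 ⟨0, rfl⟩ ha2.1 ha2.2 hc1 hc2
  have heq2 : a.1 = p.1 := (hM.1 a haM p hp).mpr heq
  refine Finset.mem_filter.mpr ⟨hp, mem_childs_iff.mpr ?_, hc⟩
  rw [← heq2]
  exact ha1

lemma sdm_D5 (hM : IsSdM T T' M) {u : V} (hu : u ∈ T.childs)
    (hunm : ∀ p ∈ M, p.1 ≠ u) : ∀ w, T.Desc u w → ∀ p ∈ M, p.1 ≠ w := by
  intro w hw p hp hpw
  obtain ⟨hu1, hu2⟩ := mem_childs_iff.mp hu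
  have hwr : w ≠ T.root := by
    intro h
    rw [h] at hw
    exact hu2 (desc_root hw)
  obtain ⟨a, haM, ha1, ha2, hd1, hd2⟩ := sdm_anc hM p hp (hpw ▸ hwr)
  rw [hpw] at hd1
  exact hunm a haM (desc_child_unique hd1 hw ha1.1 ha1.2 hu1 hu2)

lemma sdm_D5' (hM : IsSdM T T' M) {u' : V'} (hu : u' ∈ T'.childs)
    (hunm : ∀ p ∈ M, p.2 ≠ u') : ∀ w', T'.Desc u' w' → ∀ p ∈ M, p.2 ≠ w' := by
  intro w' hw p hp hpw
  obtain ⟨hu1, hu2⟩ := mem_childs_iff.mp hu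
  have hwr : w' ≠ T'.root := by
    intro h
    rw [h] at hw
    exact hu2 (desc_root hw)
  have h1 : p.1 ≠ T.root := by
    intro h
    exact (hpw ▸ hwr) ((hM.1 p hp _ hM.2.1).mp h)
  obtain ⟨a, haM, ha1, ha2, hd1, hd2⟩ := sdm_anc hM p hp h1
  rw [hpw] at hd2
  exact hunm a haM (desc_child_unique hd2 hw ha2.1 ha2.2 hu1 hu2)

end SdM
end LTree

namespace LTree
section Sub
variable {V V' : Type} {σ : Type} [Fintype V] [Fintype V']
variable {T : LTree V σ} {T' : LTree V' σ} {M : Finset (V × V')}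

set_option maxHeartbeats 2000000 in
lemma sub_cost_eq (γ : Option σ → Option σ → ℝ) (hM : IsSdM T T' M)
    {q : V × V'} (hq : q ∈ M.filter (fun p => p.1 ∈ T.childs ∧ p.2 ∈ T'.childs)) :
    cost γ (T.sub q.1) (T'.sub q.2) (restrictMap T T' q.1 q.2 M) =
      (∑ p ∈ M.filter (fun p => T.Desc q.1 p.1),
          γ (some (T.label p.1)) (some (T'.label p.2)))
      + (∑ w ∈ Finset.univ.filter (fun w : V => T.Desc q.1 w ∧ ∀ p ∈ M, p.1 ≠ w),
          γ (some (T.label w)) none)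
      + (∑ w' ∈ Finset.univ.filter (fun w' : V' => T'.Desc q.2 w' ∧ ∀ p ∈ M, p.2 ≠ w'),
          γ none (some (T'.label w'))) := by
  simp only [cost]
  have e1 : (∑ pr ∈ restrictMap T T' q.1 q.2 M,
      γ (some ((T.sub q.1).label pr.1)) (some ((T'.sub q.2).label pr.2)))
      = ∑ p ∈ M.filter (fun p => T.Desc q.1 p.1),
          γ (some (T.label p.1)) (some (T'.label p.2)) := by
    rw [show M.filter (fun p => T.Desc q.1 p.1)
        = M.filter (fun p => T.Desc q.1 p.1 ∧ T'.Desc q.2 p.2) from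
      (Finset.filter_congr (fun p hp =>
        ⟨fun h => h.1, fun h => ⟨h, sdm_D3 hM q hq p hp h⟩⟩)).symm]
    refine Finset.sum_bij' (fun pr _ => ((pr.1 : V), (pr.2 : V')))
      (fun p hp => (⟨p.1, (Finset.mem_filter.mp hp).2.1⟩, ⟨p.2, (Finset.mem_filter.mp hp).2.2⟩))
      ?_ ?_ ?_ ?_ ?_
    · intro pr hpr
      have hm : ((pr.1 : V), (pr.2 : V')) ∈ M := (Finset.mem_filter.mp hpr).2
      exact Finset.mem_filter.mpr ⟨hm, pr.1.2, pr.2.2⟩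
    · intro p hp
      refine Finset.mem_filter.mpr ⟨Finset.mem_univ _, ?_⟩
      simpa using (Finset.mem_filter.mp hp).1
    · intro pr hpr; rfl
    · intro p hp; rfl
    · intro pr hpr; rfl
  have e2 : ∀ (ii : DecidablePred fun w : {w : V // T.Desc q.1 w} =>
        ∀ pr ∈ restrictMap T T' q.1 q.2 M, pr.1 ≠ w),
      (∑ w ∈ @Finset.filter _ _ ii Finset.univ, γ (some ((T.sub q.1).label w)) none)
      = ∑ w ∈ Finset.univ.filter (fun w : V => T.Desc q.1 w ∧ ∀ p ∈ M, p.1 ≠ w),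
          γ (some (T.label w)) none := by
    intro ii
    refine Finset.sum_bij' (fun w _ => (w : V))
      (fun w hw => ⟨w, ((Finset.mem_filter.mp hw).2).1⟩) ?_ ?_ ?_ ?_ ?_
    · intro w hw
      have hunm := (Finset.mem_filter.mp hw).2
      refine Finset.mem_filter.mpr ⟨Finset.mem_univ _, w.2, ?_⟩
      intro p hp hpw
      have hd1 : T.Desc q.1 p.1 := hpw ▸ w.2
      have hd2 : T'.Desc q.2 p.2 := sdm_D3 hM q hq p hp hd1
      refine hunm (⟨p.1, hd1⟩, ⟨p.2, hd2⟩) ?_ (Subtype.ext hpw)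
      exact Finset.mem_filter.mpr ⟨Finset.mem_univ _, by simpa using hp⟩
    · intro w hw
      refine Finset.mem_filter.mpr ⟨Finset.mem_univ _, ?_⟩
      intro pr hpr h
      have hm : ((pr.1 : V), (pr.2 : V')) ∈ M := (Finset.mem_filter.mp hpr).2
      exact ((Finset.mem_filter.mp hw).2).2 _ hm (congrArg Subtype.val h)
    · intro w hw; rfl
    · intro w hw; rfl
    · intro w hw; rfl
  have e3 : ∀ (ii : DecidablePred fun w' : {w' : V' // T'.Desc q.2 w'} =>
        ∀ pr ∈ restrictMap T T' q.1 q.2 M, pr.2 ≠ w'),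
      (∑ w' ∈ @Finset.filter _ _ ii Finset.univ, γ none (some ((T'.sub q.2).label w')))
      = ∑ w' ∈ Finset.univ.filter (fun w' : V' => T'.Desc q.2 w' ∧ ∀ p ∈ M, p.2 ≠ w'),
          γ none (some (T'.label w')) := by
    intro ii
    refine Finset.sum_bij' (fun w _ => (w : V'))
      (fun w hw => ⟨w, ((Finset.mem_filter.mp hw).2).1⟩) ?_ ?_ ?_ ?_ ?_
    · intro w hw
      have hunm := (Finset.mem_filter.mp hw).2
      refine Finset.mem_filter.mpr ⟨Finset.mem_univ _, w.2, ?_⟩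
      intro p hp hpw
      have hd2 : T'.Desc q.2 p.2 := hpw ▸ w.2
      have hd1 : T.Desc q.1 p.1 := sdm_D3' hM q hq p hp hd2
      refine hunm (⟨p.1, hd1⟩, ⟨p.2, hd2⟩) ?_ (Subtype.ext hpw)
      exact Finset.mem_filter.mpr ⟨Finset.mem_univ _, by simpa using hp⟩
    · intro w hw
      refine Finset.mem_filter.mpr ⟨Finset.mem_univ _, ?_⟩
      intro pr hpr h
      have hm : ((pr.1 : V), (pr.2 : V')) ∈ M := (Finset.mem_filter.mp hpr).2
      exact ((Finset.mem_filter.mp hw).2).2 _ hm (congrArg Subtype.val h)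
    · intro w hw; rfl
    · intro w hw; rfl
    · intro w hw; rfl
  rw [e1, e2 _, e3 _]

end Sub
end LTree

set_option maxHeartbeats 1000000 in
/-- Cost decomposition of an SdM: the cost of an SdM `M`
between `T` and `T'` with metric cost function `γ` equals the relabeling cost
of the roots, plus the costs of the restrictions of `M` to the pairs of child
subtrees whose roots are matched by `M`, plus the total deletion costs of the
unmatched child subtrees of `r(T)`, plus the total insertion costs of the
unmatched child subtrees of `r(T')` (a child subtree being unmatched if its
root occurs in no pair of `M`). -/
theorem sdm_cost_decomposition {σ : Type} (γ : Option σ → Option σ → ℝ)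
    (hγ : IsMetricCost γ) {V V' : Type} [Fintype V] [Fintype V']
    (T : LTree V σ) (T' : LTree V' σ) (M : Finset (V × V'))
    (hM : IsSdM T T' M) :
    cost γ T T' M =
      γ (some (T.label T.root)) (some (T'.label T'.root))
      + (∑ p ∈ M.filter (fun p => p.1 ∈ T.childs ∧ p.2 ∈ T'.childs),
          cost γ (T.sub p.1) (T'.sub p.2) (LTree.restrictMap T T' p.1 p.2 M))
      + (∑ u ∈ T.childs.filter (fun u => ∀ p ∈ M, p.1 ≠ u), delCost γ T u)
      + (∑ u' ∈ T'.childs.filter (fun u' => ∀ p ∈ M, p.2 ≠ u'),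
          insCost γ T' u') := by
  have hdef := hM.1
  have hroot := hM.2.1
  -- Abbreviations
  have EA : (∑ p ∈ M, γ (some (T.label p.1)) (some (T'.label p.2)))
      = γ (some (T.label T.root)) (some (T'.label T'.root))
        + ∑ q ∈ M.filter (fun p => p.1 ∈ T.childs ∧ p.2 ∈ T'.childs),
            ∑ p ∈ M.filter (fun p => T.Desc q.1 p.1),
              γ (some (T.label p.1)) (some (T'.label p.2)) := by
    have h1 : (∑ q ∈ M.filter (fun p => p.1 ∈ T.childs ∧ p.2 ∈ T'.childs),
          ∑ p ∈ M.filter (fun p => T.Desc q.1 p.1),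
            γ (some (T.label p.1)) (some (T'.label p.2)))
        = ∑ p ∈ M, if p.1 ≠ T.root
            then γ (some (T.label p.1)) (some (T'.label p.2)) else 0 := by
      calc (∑ q ∈ M.filter (fun p => p.1 ∈ T.childs ∧ p.2 ∈ T'.childs),
              ∑ p ∈ M.filter (fun p => T.Desc q.1 p.1),
                γ (some (T.label p.1)) (some (T'.label p.2)))
          = ∑ q ∈ M.filter (fun p => p.1 ∈ T.childs ∧ p.2 ∈ T'.childs),
              ∑ p ∈ M, if T.Desc q.1 p.1
                then γ (some (T.label p.1)) (some (T'.label p.2)) else 0 :=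
            Finset.sum_congr rfl (fun q _ => Finset.sum_filter _ _)
        _ = ∑ p ∈ M, ∑ q ∈ M.filter (fun p => p.1 ∈ T.childs ∧ p.2 ∈ T'.childs),
              if T.Desc q.1 p.1
                then γ (some (T.label p.1)) (some (T'.label p.2)) else 0 :=
            Finset.sum_comm
        _ = ∑ p ∈ M, if p.1 ≠ T.root
            then γ (some (T.label p.1)) (some (T'.label p.2)) else 0 := by
            refine Finset.sum_congr rfl fun p hp => ?_
            by_cases hpr : p.1 = T.root
            · rw [if_neg (by simp [hpr])]
              refine Finset.sum_eq_zero fun q hq => ?_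
              rw [if_neg]
              intro hdq
              rw [hpr] at hdq
              exact (mem_childs_iff.mp (Finset.mem_filter.mp hq).2.1).2 (desc_root hdq)
            · rw [if_pos hpr]
              obtain ⟨q₀, hq₀, hd₀, -⟩ := sdm_anc' hM p hp hpr
              rw [Finset.sum_eq_single_of_mem q₀ hq₀ ?_, if_pos hd₀]
              intro q hq hne
              rw [if_neg]
              intro hd
              apply hne
              obtain ⟨hqM, hqc, -⟩ := Finset.mem_filter.mp hq
              obtain ⟨hq₀M, hq₀c, -⟩ := Finset.mem_filter.mp hq₀
              have h11 : q.1 = q₀.1 := desc_child_unique hd hd₀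
                (mem_childs_iff.mp hqc).1 (mem_childs_iff.mp hqc).2
                (mem_childs_iff.mp hq₀c).1 (mem_childs_iff.mp hq₀c).2
              exact Prod.ext h11 ((hdef q hqM q₀ hq₀M).mp h11)
    have h2 : (∑ p ∈ M, if p.1 = T.root
          then γ (some (T.label p.1)) (some (T'.label p.2)) else 0)
        = γ (some (T.label T.root)) (some (T'.label T'.root)) := by
      rw [Finset.sum_eq_single_of_mem (T.root, T'.root) hroot ?_, if_pos rfl]
      intro p hp hne
      rw [if_neg]
      intro hpr
      exact hne (Prod.ext hpr ((hdef p hp _ hroot).mp hpr))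
    calc (∑ p ∈ M, γ (some (T.label p.1)) (some (T'.label p.2)))
        = ∑ p ∈ M, ((if p.1 = T.root
              then γ (some (T.label p.1)) (some (T'.label p.2)) else 0)
            + if p.1 ≠ T.root
              then γ (some (T.label p.1)) (some (T'.label p.2)) else 0) := by
          refine Finset.sum_congr rfl fun p _ => ?_
          by_cases hpr : p.1 = T.root <;> simp [hpr]
      _ = (∑ p ∈ M, if p.1 = T.root
              then γ (some (T.label p.1)) (some (T'.label p.2)) else 0)
          + ∑ p ∈ M, if p.1 ≠ T.root
              then γ (some (T.label p.1)) (some (T'.label p.2)) else 0 :=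
        Finset.sum_add_distrib
      _ = _ := by rw [h2, ← h1]
  have EB : ∀ (ii : DecidablePred fun w : V => ∀ p ∈ M, p.1 ≠ w),
      (∑ w ∈ @Finset.filter _ _ ii Finset.univ, γ (some (T.label w)) none)
      = (∑ q ∈ M.filter (fun p => p.1 ∈ T.childs ∧ p.2 ∈ T'.childs),
          ∑ w ∈ Finset.univ.filter (fun w : V => T.Desc q.1 w ∧ ∀ p ∈ M, p.1 ≠ w),
            γ (some (T.label w)) none)
        + ∑ u ∈ T.childs.filter (fun u => ∀ p ∈ M, p.1 ≠ u), delCost γ T u := by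
    intro ii
    have ha : (∑ u ∈ T.childs,
          ∑ w ∈ Finset.univ.filter (fun w : V => T.Desc u w ∧ ∀ p ∈ M, p.1 ≠ w),
            γ (some (T.label w)) none)
        = ∑ w ∈ @Finset.filter _ _ ii Finset.univ, γ (some (T.label w)) none := by
      calc (∑ u ∈ T.childs,
              ∑ w ∈ Finset.univ.filter (fun w : V => T.Desc u w ∧ ∀ p ∈ M, p.1 ≠ w),
                γ (some (T.label w)) none)
          = ∑ u ∈ T.childs, ∑ w ∈ Finset.univ,
              if T.Desc u w ∧ ∀ p ∈ M, p.1 ≠ w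
                then γ (some (T.label w)) none else 0 :=
            Finset.sum_congr rfl (fun u _ => Finset.sum_filter _ _)
        _ = ∑ w ∈ Finset.univ, ∑ u ∈ T.childs,
              if T.Desc u w ∧ ∀ p ∈ M, p.1 ≠ w
                then γ (some (T.label w)) none else 0 := Finset.sum_comm
        _ = ∑ w ∈ Finset.univ, if ∀ p ∈ M, p.1 ≠ w
                then γ (some (T.label w)) none else 0 := by
            refine Finset.sum_congr rfl fun w _ => ?_
            by_cases hu : ∀ p ∈ M, p.1 ≠ w
            · rw [if_pos hu]
              have hwr : w ≠ T.root := fun h => hu _ hroot h.symm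
              obtain ⟨u₀, hu₀1, hu₀2, hd₀⟩ := exists_child_anc hwr
              rw [Finset.sum_eq_single_of_mem u₀ (mem_childs_iff.mpr ⟨hu₀1, hu₀2⟩) ?_,
                if_pos ⟨hd₀, hu⟩]
              intro u hu' hne
              rw [if_neg]
              rintro ⟨hd, -⟩
              exact hne (desc_child_unique hd hd₀ (mem_childs_iff.mp hu').1
                (mem_childs_iff.mp hu').2 hu₀1 hu₀2)
            · rw [if_neg hu]
              refine Finset.sum_eq_zero fun u _ => ?_
              rw [if_neg]
              rintro ⟨-, h2⟩
              exact hu h2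
        _ = _ := (Finset.sum_filter _ _).symm
    have hb : (∑ u ∈ T.childs.filter (fun u => ∀ p ∈ M, p.1 ≠ u),
          ∑ w ∈ Finset.univ.filter (fun w : V => T.Desc u w ∧ ∀ p ∈ M, p.1 ≠ w),
            γ (some (T.label w)) none)
        = ∑ u ∈ T.childs.filter (fun u => ∀ p ∈ M, p.1 ≠ u), delCost γ T u := by
      refine Finset.sum_congr rfl fun u hu => ?_
      obtain ⟨huc, hunm⟩ := Finset.mem_filter.mp hu
      simp only [delCost]
      refine Finset.sum_congr (Finset.filter_congr fun w _ => ?_) (fun _ _ => rfl)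
      exact ⟨fun h => h.1, fun h => ⟨h, sdm_D5 hM huc hunm w h⟩⟩
    have hc : (∑ q ∈ M.filter (fun p => p.1 ∈ T.childs ∧ p.2 ∈ T'.childs),
          ∑ w ∈ Finset.univ.filter (fun w : V => T.Desc q.1 w ∧ ∀ p ∈ M, p.1 ≠ w),
            γ (some (T.label w)) none)
        = ∑ u ∈ T.childs.filter (fun u => ¬ ∀ p ∈ M, p.1 ≠ u),
            ∑ w ∈ Finset.univ.filter (fun w : V => T.Desc u w ∧ ∀ p ∈ M, p.1 ≠ w),
              γ (some (T.label w)) none := by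
      refine Finset.sum_bij (fun q _ => q.1) ?_ ?_ ?_ ?_
      · intro q hq
        obtain ⟨hqM, hqc, -⟩ := Finset.mem_filter.mp hq
        exact Finset.mem_filter.mpr ⟨hqc, fun hall => hall q hqM rfl⟩
      · intro q1 h1 q2 h2 heq
        exact Prod.ext heq ((hdef q1 (Finset.mem_filter.mp h1).1
          q2 (Finset.mem_filter.mp h2).1).mp heq)
      · intro u hu
        obtain ⟨huc, hnu⟩ := Finset.mem_filter.mp hu
        push_neg at hnu
        obtain ⟨p, hp, hpu⟩ := hnu
        exact ⟨p, sdm_D4 hM p hp (by rwa [hpu]), hpu⟩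
      · intro q hq; rfl
    calc (∑ w ∈ @Finset.filter _ _ ii Finset.univ, γ (some (T.label w)) none)
        = ∑ u ∈ T.childs,
            ∑ w ∈ Finset.univ.filter (fun w : V => T.Desc u w ∧ ∀ p ∈ M, p.1 ≠ w),
              γ (some (T.label w)) none := ha.symm
      _ = (∑ u ∈ T.childs.filter (fun u => ∀ p ∈ M, p.1 ≠ u),
            ∑ w ∈ Finset.univ.filter (fun w : V => T.Desc u w ∧ ∀ p ∈ M, p.1 ≠ w),
              γ (some (T.label w)) none)
          + ∑ u ∈ T.childs.filter (fun u => ¬ ∀ p ∈ M, p.1 ≠ u),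
              ∑ w ∈ Finset.univ.filter (fun w : V => T.Desc u w ∧ ∀ p ∈ M, p.1 ≠ w),
                γ (some (T.label w)) none :=
        (Finset.sum_filter_add_sum_filter_not _ _ _).symm
      _ = _ := by rw [hb, ← hc]; ring
  have EC : ∀ (ii : DecidablePred fun w' : V' => ∀ p ∈ M, p.2 ≠ w'),
      (∑ w' ∈ @Finset.filter _ _ ii Finset.univ, γ none (some (T'.label w')))
      = (∑ q ∈ M.filter (fun p => p.1 ∈ T.childs ∧ p.2 ∈ T'.childs),
          ∑ w' ∈ Finset.univ.filter (fun w' : V' => T'.Desc q.2 w' ∧ ∀ p ∈ M, p.2 ≠ w'),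
            γ none (some (T'.label w')))
        + ∑ u' ∈ T'.childs.filter (fun u' => ∀ p ∈ M, p.2 ≠ u'), insCost γ T' u' := by
    intro ii
    have ha : (∑ u' ∈ T'.childs,
          ∑ w' ∈ Finset.univ.filter (fun w' : V' => T'.Desc u' w' ∧ ∀ p ∈ M, p.2 ≠ w'),
            γ none (some (T'.label w')))
        = ∑ w' ∈ @Finset.filter _ _ ii Finset.univ, γ none (some (T'.label w')) := by
      calc (∑ u' ∈ T'.childs,
              ∑ w' ∈ Finset.univ.filter (fun w' : V' => T'.Desc u' w' ∧ ∀ p ∈ M, p.2 ≠ w'),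
                γ none (some (T'.label w')))
          = ∑ u' ∈ T'.childs, ∑ w' ∈ Finset.univ,
              if T'.Desc u' w' ∧ ∀ p ∈ M, p.2 ≠ w'
                then γ none (some (T'.label w')) else 0 :=
            Finset.sum_congr rfl (fun u _ => Finset.sum_filter _ _)
        _ = ∑ w' ∈ Finset.univ, ∑ u' ∈ T'.childs,
              if T'.Desc u' w' ∧ ∀ p ∈ M, p.2 ≠ w'
                then γ none (some (T'.label w')) else 0 := Finset.sum_comm
        _ = ∑ w' ∈ Finset.univ, if ∀ p ∈ M, p.2 ≠ w'
                then γ none (some (T'.label w')) else 0 := by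
            refine Finset.sum_congr rfl fun w' _ => ?_
            by_cases hu : ∀ p ∈ M, p.2 ≠ w'
            · rw [if_pos hu]
              have hwr : w' ≠ T'.root := fun h => hu _ hroot h.symm
              obtain ⟨u₀, hu₀1, hu₀2, hd₀⟩ := exists_child_anc hwr
              rw [Finset.sum_eq_single_of_mem u₀ (mem_childs_iff.mpr ⟨hu₀1, hu₀2⟩) ?_,
                if_pos ⟨hd₀, hu⟩]
              intro u hu' hne
              rw [if_neg]
              rintro ⟨hd, -⟩
              exact hne (desc_child_unique hd hd₀ (mem_childs_iff.mp hu').1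
                (mem_childs_iff.mp hu').2 hu₀1 hu₀2)
            · rw [if_neg hu]
              refine Finset.sum_eq_zero fun u _ => ?_
              rw [if_neg]
              rintro ⟨-, h2⟩
              exact hu h2
        _ = _ := (Finset.sum_filter _ _).symm
    have hb : (∑ u' ∈ T'.childs.filter (fun u' => ∀ p ∈ M, p.2 ≠ u'),
          ∑ w' ∈ Finset.univ.filter (fun w' : V' => T'.Desc u' w' ∧ ∀ p ∈ M, p.2 ≠ w'),
            γ none (some (T'.label w')))
        = ∑ u' ∈ T'.childs.filter (fun u' => ∀ p ∈ M, p.2 ≠ u'), insCost γ T' u' := by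
      refine Finset.sum_congr rfl fun u' hu => ?_
      obtain ⟨huc, hunm⟩ := Finset.mem_filter.mp hu
      simp only [insCost]
      refine Finset.sum_congr (Finset.filter_congr fun w' _ => ?_) (fun _ _ => rfl)
      exact ⟨fun h => h.1, fun h => ⟨h, sdm_D5' hM huc hunm w' h⟩⟩
    have hc : (∑ q ∈ M.filter (fun p => p.1 ∈ T.childs ∧ p.2 ∈ T'.childs),
          ∑ w' ∈ Finset.univ.filter (fun w' : V' => T'.Desc q.2 w' ∧ ∀ p ∈ M, p.2 ≠ w'),
            γ none (some (T'.label w')))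
        = ∑ u' ∈ T'.childs.filter (fun u' => ¬ ∀ p ∈ M, p.2 ≠ u'),
            ∑ w' ∈ Finset.univ.filter (fun w' : V' => T'.Desc u' w' ∧ ∀ p ∈ M, p.2 ≠ w'),
              γ none (some (T'.label w')) := by
      refine Finset.sum_bij (fun q _ => q.2) ?_ ?_ ?_ ?_
      · intro q hq
        obtain ⟨hqM, -, hqc⟩ := Finset.mem_filter.mp hq
        exact Finset.mem_filter.mpr ⟨hqc, fun hall => hall q hqM rfl⟩
      · intro q1 h1 q2 h2 heq
        exact Prod.ext ((hdef q1 (Finset.mem_filter.mp h1).1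
          q2 (Finset.mem_filter.mp h2).1).mpr heq) heq
      · intro u' hu
        obtain ⟨huc, hnu⟩ := Finset.mem_filter.mp hu
        push_neg at hnu
        obtain ⟨p, hp, hpu⟩ := hnu
        exact ⟨p, sdm_D4' hM p hp (by rwa [hpu]), hpu⟩
      · intro q hq; rfl
    calc (∑ w' ∈ @Finset.filter _ _ ii Finset.univ, γ none (some (T'.label w')))
        = ∑ u' ∈ T'.childs,
            ∑ w' ∈ Finset.univ.filter (fun w' : V' => T'.Desc u' w' ∧ ∀ p ∈ M, p.2 ≠ w'),
              γ none (some (T'.label w')) := ha.symm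
      _ = (∑ u' ∈ T'.childs.filter (fun u' => ∀ p ∈ M, p.2 ≠ u'),
            ∑ w' ∈ Finset.univ.filter (fun w' : V' => T'.Desc u' w' ∧ ∀ p ∈ M, p.2 ≠ w'),
              γ none (some (T'.label w')))
          + ∑ u' ∈ T'.childs.filter (fun u' => ¬ ∀ p ∈ M, p.2 ≠ u'),
              ∑ w' ∈ Finset.univ.filter (fun w' : V' => T'.Desc u' w' ∧ ∀ p ∈ M, p.2 ≠ w'),
                γ none (some (T'.label w')) :=
        (Finset.sum_filter_add_sum_filter_not _ _ _).symm
      _ = _ := by rw [hb, ← hc]; ring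
  have hsub : (∑ q ∈ M.filter (fun p => p.1 ∈ T.childs ∧ p.2 ∈ T'.childs),
        cost γ (T.sub q.1) (T'.sub q.2) (LTree.restrictMap T T' q.1 q.2 M))
      = (∑ q ∈ M.filter (fun p => p.1 ∈ T.childs ∧ p.2 ∈ T'.childs),
          ∑ p ∈ M.filter (fun p => T.Desc q.1 p.1),
            γ (some (T.label p.1)) (some (T'.label p.2)))
        + ((∑ q ∈ M.filter (fun p => p.1 ∈ T.childs ∧ p.2 ∈ T'.childs),
            ∑ w ∈ Finset.univ.filter (fun w : V => T.Desc q.1 w ∧ ∀ p ∈ M, p.1 ≠ w),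
              γ (some (T.label w)) none)
          + ∑ q ∈ M.filter (fun p => p.1 ∈ T.childs ∧ p.2 ∈ T'.childs),
              ∑ w' ∈ Finset.univ.filter (fun w' : V' => T'.Desc q.2 w' ∧ ∀ p ∈ M, p.2 ≠ w'),
                γ none (some (T'.label w')) ) := by
    rw [Finset.sum_congr rfl (fun q hq => sub_cost_eq γ hM hq)]
    rw [Finset.sum_add_distrib, Finset.sum_add_distrib]
    ring
  rw [hsub]
  simp only [cost]
  rw [EA, EB _, EC _]
  ring
end

section
/- Correspondence between Weisfeiler-Lehman labels and unfolding trees: for all finite labeled graphs G, G', all vertices v ∈ V(G), v' ∈ V(G'), and every iteration i ∈ ℕ, the Weisfeiler-Lehman labels computed with an injective hash function satisfy ℓ_i(v) = ℓ_i(v') if and only if the depth-i unfolding trees T^i(G, v) and T^i(G', v') are isomorphic as rooted labeled trees. In particular, there is a bijection between the labels in Σ_i occurring on the graphs and the set of pairwise non-isomorphic depth-i unfolding trees. -/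
open scoped Classical

/-- A finite undirected labeled graph: vertices `Fin n`, a symmetric
irreflexive neighborhood relation given by `nbr`, and a vertex labeling
with values in `σ`. -/
structure LGraph (σ : Type) where
  n : ℕ
  nbr : Fin n → Finset (Fin n)
  symm : ∀ u v, u ∈ nbr v → v ∈ nbr u
  irrefl : ∀ v, v ∉ nbr v
  label : Fin n → σ

/-- The type of isomorphism classes of depth-`i` unfolding trees over label
alphabet `σ`: a depth-0 unfolding tree is just a root label, and a
depth-`(i+1)` unfolding tree is a root label together with the multiset of
its depth-`i` child subtrees. (Using multisets of children makes equality in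
`UT σ i` coincide with isomorphism of rooted labeled trees.) -/
def UT (σ : Type) : ℕ → Type
  | 0 => σ
  | (i + 1) => σ × Multiset (UT σ i)

/-- The depth-`i` unfolding tree `T^i(G, v)` of the graph `G` at vertex `v`
(as an isomorphism class): the root is labeled `ℓ₀(v)` and its child subtrees
are the depth-`(i-1)` unfolding trees at the neighbors of `v`. -/
def utree {σ : Type} (G : LGraph σ) : (i : ℕ) → Fin G.n → UT σ i
  | 0, v => G.label v
  | (i + 1), v => (G.label v, (G.nbr v).val.map (utree G i))

/-- The Weisfeiler-Lehman labels of a graph `G` whose vertices are initially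
labeled over `Λ 0`, computed with hash functions `hash i` mapping the pair of
a vertex's current label and the multiset of its neighbors' current labels to
a new label in `Λ (i+1)`. -/
def wl {Λ : ℕ → Type} (hash : ∀ i, Λ i → Multiset (Λ i) → Λ (i + 1))
    (G : LGraph (Λ 0)) : (i : ℕ) → Fin G.n → Λ i
  | 0 => G.label
  | (i + 1) => fun v => hash i (wl hash G i v) ((G.nbr v).val.map (wl hash G i))

/-!
The Weisfeiler-Lehman label is a function of the unfolding tree: `ℓ_{i+1}(v)` is the hash of
`ℓ_i(v)`, recomputed from the truncation of `T^{i+1}(G, v)` to depth `i`, and of the labels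
of the child subtrees. This encoding makes sense for every depth-`i` tree, and injective hashes
make it injective by induction on `i` (the root label survives truncation). Hence equal labels
and equal unfolding trees determine each other.
-/

variable {σ : Type}

def rootLabel : ∀ i, UT σ i → σ
  | 0, t => t
  | (_ + 1), t => t.1

def truncUT : ∀ i, UT σ (i + 1) → UT σ i
  | 0, t => t.1
  | (i + 1), t => (t.1, t.2.map (truncUT i))

lemma rootLabel_truncUT (i : ℕ) (t : UT σ (i + 1)) :
    rootLabel i (truncUT i t) = rootLabel (i + 1) t := by
  cases i <;> rfl

lemma truncUT_utree (G : LGraph σ) (i : ℕ) (v : Fin G.n) :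
    truncUT i (utree G (i + 1) v) = utree G i v := by
  induction i generalizing v with
  | zero => rfl
  | succ i ih =>
    show (G.label v, ((G.nbr v).val.map (utree G (i + 1))).map (truncUT i))
        = (G.label v, (G.nbr v).val.map (utree G i))
    rw [Multiset.map_map]
    exact congrArg _ (Multiset.map_congr rfl fun u _ => ih u)

section Encode

variable {Λ : ℕ → Type} (hash : ∀ i, Λ i → Multiset (Λ i) → Λ (i + 1))

def wlEncode : ∀ i, UT (Λ 0) i → Λ i
  | 0, t => t
  | (i + 1), t => hash i (wlEncode i (truncUT i t)) (t.2.map (wlEncode i))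

lemma wl_eq_wlEncode_utree (G : LGraph (Λ 0)) (i : ℕ) (v : Fin G.n) :
    wl hash G i v = wlEncode hash i (utree G i v) := by
  induction i generalizing v with
  | zero => rfl
  | succ i ih =>
    show hash i (wl hash G i v) ((G.nbr v).val.map (wl hash G i))
        = hash i (wlEncode hash i (truncUT i (utree G (i + 1) v)))
            (((G.nbr v).val.map (utree G i)).map (wlEncode hash i))
    rw [truncUT_utree, Multiset.map_map, ih]
    exact congrArg _ (Multiset.map_congr rfl fun u _ => ih u)

lemma wlEncode_injective
    (hinj : ∀ i a₁ m₁ a₂ m₂, hash i a₁ m₁ = hash i a₂ m₂ → a₁ = a₂ ∧ m₁ = m₂) :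
    ∀ i, Function.Injective (wlEncode hash i)
  | 0 => fun _ _ h => h
  | (i + 1) => by
    intro t t' h
    obtain ⟨htrunc, hchildren⟩ := hinj i _ _ _ _ h
    have hroot : rootLabel (i + 1) t = rootLabel (i + 1) t' := by
      rw [← rootLabel_truncUT, ← rootLabel_truncUT, wlEncode_injective hinj i htrunc]
    have hm : t.2 = t'.2 := Multiset.map_injective (wlEncode_injective hinj i) hchildren
    exact Prod.ext hroot hm

end Encode

/-- Correspondence between Weisfeiler-Lehman labels and
unfolding trees: if the Weisfeiler-Lehman labels are computed with injective
(perfect) hash functions, then for all graphs `G, G'`, vertices `v, v'`, and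
every iteration `i`, the labels `ℓᵢ(v)` and `ℓᵢ(v')` are equal if and only if
the depth-`i` unfolding trees `T^i(G, v)` and `T^i(G', v')` are isomorphic as
rooted labeled trees (i.e., equal as elements of `UT (Λ 0) i`). In particular,
the map sending a WL label to the corresponding unfolding tree is a
well-defined bijection between the occurring labels in `Σᵢ` and the pairwise
non-isomorphic depth-`i` unfolding trees. -/
theorem wl_label_eq_iff_utree_eq {Λ : ℕ → Type}
    (hash : ∀ i, Λ i → Multiset (Λ i) → Λ (i + 1))
    (hinj : ∀ i a₁ m₁ a₂ m₂, hash i a₁ m₁ = hash i a₂ m₂ → a₁ = a₂ ∧ m₁ = m₂)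
    (G G' : LGraph (Λ 0)) :
    ∀ (i : ℕ) (v : Fin G.n) (v' : Fin G'.n),
      wl hash G i v = wl hash G' i v' ↔ utree G i v = utree G' i v' := by
  intro i v v'
  rw [wl_eq_wlEncode_utree, wl_eq_wlEncode_utree]
  exact (wlEncode_injective hash hinj i).eq_iff
end
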